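/- Let μ be a probability measure on ℝ^d with finite second moment, ψ ∈ C_c^∞(ℝ^d), and let k_π ∈ C²(ℝ^d × ℝ^d; ℝ) be symmetric with |k_π| integrable with respect to μ⊗μ. Assume: (i) there is a continuous function L : ℝ^d → [0,∞), integrable with respect to every probability measure with finite second moment, such that for every y the maps x ↦ ∇₁k_π(x,y) and x ↦ ∇₂k_π(x,y) are L(y)-Lipschitz; (ii) the map (x,y) ↦ ‖H₁k_π(x,y)‖_op is integrable with respect to ρ⊗ρ′ for all probability measures ρ, ρ′ with finite second moment. Then G(t) = (1/2)∬ k_π(x + t∇ψ(x), y + t∇ψ(y)) dμ(x)dμ(y) is twice differentiable at t = 0 and G″(0) = ∬ ⟨∇ψ(x), ∇₁∇₂k_π(x,y) ∇ψ(y)⟩ dμ(x)dμ(y) + ∬ ⟨∇ψ(x), H₁k_π(x,y) ∇ψ(x)⟩ dμ(x)dμ(y), where ∇₁∇₂k_π(x,y) is the d×d matrix of mixed second partials ∂²k_π/∂x_i∂y_j and H₁k_π(x,y) is the Hessian of k_π in its first variable. -/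

import Mathlib

open MeasureTheory Function Set
open scoped RealInnerProductSpace NNReal ENNReal

noncomputable section

/-- `ℝ^d` with the Euclidean structure. -/
abbrev Ed (d : ℕ) := EuclideanSpace ℝ (Fin d)

variable {d : ℕ}

/-- Gradient of a kernel in its first variable, `∇₁k(x,y)`. -/
def grad1 (k : Ed d → Ed d → ℝ) (x y : Ed d) : Ed d :=
  gradient (fun x' => k x' y) x

/-- Gradient of a kernel in its second variable, `∇₂k(x,y)`. -/
def grad2 (k : Ed d → Ed d → ℝ) (x y : Ed d) : Ed d :=
  gradient (fun y' => k x y') y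

/-- `div₁∇₂ k (x,y) = Σ_i ∂²k/∂x_i∂y_i (x,y)`. -/
def div1grad2 (k : Ed d → Ed d → ℝ) (x y : Ed d) : ℝ :=
  ∑ i : Fin d,
    fderiv ℝ (fun x' => fderiv ℝ (fun y' => k x' y') y (EuclideanSpace.single i 1)) x
      (EuclideanSpace.single i 1)

/-- The Stein kernel `k_π` built from the base kernel `k` and the score `s = ∇ log π`. -/
def steinKernel (k : Ed d → Ed d → ℝ) (s : Ed d → Ed d) (x y : Ed d) : ℝ :=
  ⟪s x, s y⟫ * k x y + ⟪s x, grad2 k x y⟫ + ⟪grad1 k x y, s y⟫ + div1grad2 k x y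

/-- Hessian of `x ↦ k(x,y)`, as a continuous linear map (`H₁k(x,y)`). -/
def hess1 (k : Ed d → Ed d → ℝ) (x y : Ed d) : Ed d →L[ℝ] Ed d :=
  fderiv ℝ (fun x' => grad1 k x' y) x

/-- Laplacian as the sum of second directional derivatives along the standard basis. -/
def lap (f : Ed d → ℝ) (x : Ed d) : ℝ :=
  ∑ i : Fin d,
    fderiv ℝ (fun x' => fderiv ℝ f x' (EuclideanSpace.single i 1)) x (EuclideanSpace.single i 1)

/-! ### Auxiliary lemmas -/

section helperlemmas

variable {d : ℕ}

lemma inner_gradient_apply (f : Ed d → ℝ) (x v : Ed d) :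
    ⟪gradient f x, v⟫ = fderiv ℝ f x v := by
  rw [gradient, InnerProductSpace.toDual_symm_apply]

lemma sum_inner_eval (ℓ : Ed d →L[ℝ] ℝ) (w : Ed d) :
    ⟪∑ i : Fin d, ℓ (EuclideanSpace.single i 1) • EuclideanSpace.single i 1, w⟫ = ℓ w := by
  have h := (EuclideanSpace.basisFun (Fin d) ℝ).sum_repr' w
  conv_rhs => rw [← h]
  rw [map_sum, sum_inner]
  congr 1; ext i
  rw [EuclideanSpace.basisFun_apply, ℓ.map_smul, real_inner_smul_left, smul_eq_mul,
    real_inner_comm, mul_comm]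

lemma gradient_rep (f : Ed d → ℝ) (x : Ed d) :
    gradient f x
      = ∑ i : Fin d, (fderiv ℝ f x (EuclideanSpace.single i 1)) • EuclideanSpace.single i 1 := by
  have h := (EuclideanSpace.basisFun (Fin d) ℝ).sum_repr' (gradient f x)
  conv_lhs => rw [← h]
  congr 1; ext i
  rw [EuclideanSpace.basisFun_apply, real_inner_comm, inner_gradient_apply]

variable {kπ : Ed d → Ed d → ℝ} {L : Ed d → ℝ}

lemma fderiv_partial1 (hk : Differentiable ℝ (uncurry kπ)) (x y u : Ed d) :
    fderiv ℝ (fun x' => kπ x' y) x u = fderiv ℝ (uncurry kπ) (x, y) (u, 0) := by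
  have h : HasFDerivAt (fun x' => kπ x' y)
      ((fderiv ℝ (uncurry kπ) (x, y)).comp (ContinuousLinearMap.inl ℝ (Ed d) (Ed d))) x :=
    (hk (x, y)).hasFDerivAt.comp (f := fun e : Ed d => (e, y)) x (hasFDerivAt_prodMk_left x y)
  rw [h.fderiv]; rfl

lemma fderiv_partial2 (hk : Differentiable ℝ (uncurry kπ)) (x y v : Ed d) :
    fderiv ℝ (fun y' => kπ x y') y v = fderiv ℝ (uncurry kπ) (x, y) (0, v) := by
  have h : HasFDerivAt (fun y' => kπ x y')
      ((fderiv ℝ (uncurry kπ) (x, y)).comp (ContinuousLinearMap.inr ℝ (Ed d) (Ed d))) y :=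
    (hk (x, y)).hasFDerivAt.comp (f := fun e : Ed d => (x, e)) y (hasFDerivAt_prodMk_right x y)
  rw [h.fderiv]; rfl

lemma inner_grad1 (hk : Differentiable ℝ (uncurry kπ)) (x y u : Ed d) :
    ⟪grad1 kπ x y, u⟫ = fderiv ℝ (uncurry kπ) (x, y) (u, 0) := by
  rw [grad1, inner_gradient_apply, fderiv_partial1 hk]

lemma inner_grad2 (hk : Differentiable ℝ (uncurry kπ)) (x y v : Ed d) :
    ⟪grad2 kπ x y, v⟫ = fderiv ℝ (uncurry kπ) (x, y) (0, v) := by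
  rw [grad2, inner_gradient_apply, fderiv_partial2 hk]

lemma fderiv_uncurry_eq (hk : Differentiable ℝ (uncurry kπ)) (x y u v : Ed d) :
    fderiv ℝ (uncurry kπ) (x, y) (u, v) = ⟪grad1 kπ x y, u⟫ + ⟪grad2 kπ x y, v⟫ := by
  rw [inner_grad1 hk, inner_grad2 hk, ← map_add]
  congr 1
  simp [Prod.ext_iff]

lemma grad1_rep (hk : Differentiable ℝ (uncurry kπ)) (x y : Ed d) :
    grad1 kπ x y = ∑ i : Fin d,
      (fderiv ℝ (uncurry kπ) (x, y) (EuclideanSpace.single i 1, 0)) • EuclideanSpace.single i 1 := by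
  rw [grad1, gradient_rep]
  exact Finset.sum_congr rfl fun i _ => by rw [fderiv_partial1 hk]

lemma grad2_rep (hk : Differentiable ℝ (uncurry kπ)) (x y : Ed d) :
    grad2 kπ x y = ∑ i : Fin d,
      (fderiv ℝ (uncurry kπ) (x, y) (0, EuclideanSpace.single i 1)) • EuclideanSpace.single i 1 := by
  rw [grad2, gradient_rep]
  exact Finset.sum_congr rfl fun i _ => by rw [fderiv_partial2 hk]

/-- Derivative of `s ↦ grad1 kπ (m s)` along a differentiable path `m`, in inner-product form. -/
lemma inner_fderiv_grad1_comp (hk : ContDiff ℝ 2 (uncurry kπ))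
    {m : Ed d → Ed d × Ed d} {J : Ed d →L[ℝ] Ed d × Ed d} {s : Ed d}
    (hm : HasFDerivAt m J s) (v w : Ed d) :
    ⟪fderiv ℝ (fun s' => grad1 kπ (m s').1 (m s').2) s v, w⟫
      = fderiv ℝ (fderiv ℝ (uncurry kπ)) (m s) (J v) (w, 0) := by
  have hdiff : Differentiable ℝ (uncurry kπ) := hk.differentiable (by norm_num)
  have h1 : Differentiable ℝ (fderiv ℝ (uncurry kπ)) :=
    (hk.fderiv_right (m := 1) (le_refl _)).differentiable one_ne_zero
  set B := fderiv ℝ (fderiv ℝ (uncurry kπ)) (m s) with hB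
  have hrepr : (fun s' => grad1 kπ (m s').1 (m s').2) = fun s' => ∑ i : Fin d,
      (fderiv ℝ (uncurry kπ) (m s') (EuclideanSpace.single i 1, 0)) • EuclideanSpace.single i 1 := by
    funext s'
    rw [grad1_rep hdiff]
  have hfd : HasFDerivAt (fun s' => ∑ i : Fin d,
      (fderiv ℝ (uncurry kπ) (m s') (EuclideanSpace.single i 1, 0)) • EuclideanSpace.single i 1)
      (∑ i : Fin d,
        (((ContinuousLinearMap.apply ℝ ℝ ((EuclideanSpace.single i 1 : Ed d), (0 : Ed d))).comp
          (B.comp J)).smulRight ((EuclideanSpace.single i 1 : Ed d)))) s := by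
    apply HasFDerivAt.fun_sum
    intro i _
    have h2 : HasFDerivAt (fun s' => fderiv ℝ (uncurry kπ) (m s')) (B.comp J) s :=
      (h1 (m s)).hasFDerivAt.comp s hm
    have h3 := (ContinuousLinearMap.apply ℝ ℝ
        ((EuclideanSpace.single i 1 : Ed d), (0 : Ed d))).hasFDerivAt.comp s h2
    exact h3.smul_const ((EuclideanSpace.single i 1 : Ed d))
  rw [hrepr, hfd.fderiv]
  rw [ContinuousLinearMap.sum_apply]
  simp only [ContinuousLinearMap.smulRight_apply, ContinuousLinearMap.comp_apply,
    ContinuousLinearMap.apply_apply]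
  have := sum_inner_eval ((B (J v)).comp (ContinuousLinearMap.inl ℝ (Ed d) (Ed d))) w
  simp only [ContinuousLinearMap.comp_apply, ContinuousLinearMap.inl_apply] at this
  exact this

/-- Derivative of `s ↦ grad2 kπ (m s)` along a differentiable path `m`, in inner-product form. -/
lemma inner_fderiv_grad2_comp (hk : ContDiff ℝ 2 (uncurry kπ))
    {m : Ed d → Ed d × Ed d} {J : Ed d →L[ℝ] Ed d × Ed d} {s : Ed d}
    (hm : HasFDerivAt m J s) (v z : Ed d) :
    ⟪fderiv ℝ (fun s' => grad2 kπ (m s').1 (m s').2) s v, z⟫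
      = fderiv ℝ (fderiv ℝ (uncurry kπ)) (m s) (J v) (0, z) := by
  have hdiff : Differentiable ℝ (uncurry kπ) := hk.differentiable (by norm_num)
  have h1 : Differentiable ℝ (fderiv ℝ (uncurry kπ)) :=
    (hk.fderiv_right (m := 1) (le_refl _)).differentiable one_ne_zero
  set B := fderiv ℝ (fderiv ℝ (uncurry kπ)) (m s) with hB
  have hrepr : (fun s' => grad2 kπ (m s').1 (m s').2) = fun s' => ∑ i : Fin d,
      (fderiv ℝ (uncurry kπ) (m s') (0, EuclideanSpace.single i 1)) • EuclideanSpace.single i 1 := by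
    funext s'
    rw [grad2_rep hdiff]
  have hfd : HasFDerivAt (fun s' => ∑ i : Fin d,
      (fderiv ℝ (uncurry kπ) (m s') (0, EuclideanSpace.single i 1)) • EuclideanSpace.single i 1)
      (∑ i : Fin d,
        (((ContinuousLinearMap.apply ℝ ℝ ((0 : Ed d), (EuclideanSpace.single i 1 : Ed d))).comp
          (B.comp J)).smulRight ((EuclideanSpace.single i 1 : Ed d)))) s := by
    apply HasFDerivAt.fun_sum
    intro i _
    have h2 : HasFDerivAt (fun s' => fderiv ℝ (uncurry kπ) (m s')) (B.comp J) s :=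
      (h1 (m s)).hasFDerivAt.comp s hm
    have h3 := (ContinuousLinearMap.apply ℝ ℝ
        ((0 : Ed d), (EuclideanSpace.single i 1 : Ed d))).hasFDerivAt.comp s h2
    exact h3.smul_const ((EuclideanSpace.single i 1 : Ed d))
  rw [hrepr, hfd.fderiv]
  rw [ContinuousLinearMap.sum_apply]
  simp only [ContinuousLinearMap.smulRight_apply, ContinuousLinearMap.comp_apply,
    ContinuousLinearMap.apply_apply]
  have := sum_inner_eval ((B (J v)).comp (ContinuousLinearMap.inr ℝ (Ed d) (Ed d))) z
  simp only [ContinuousLinearMap.comp_apply, ContinuousLinearMap.inr_apply] at this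
  exact this

lemma inner_hess1 (hk : ContDiff ℝ 2 (uncurry kπ)) (x y u w : Ed d) :
    ⟪hess1 kπ x y u, w⟫ = fderiv ℝ (fderiv ℝ (uncurry kπ)) (x, y) (u, 0) (w, 0) :=
  inner_fderiv_grad1_comp hk (hasFDerivAt_prodMk_left x y) u w

lemma inner_grad1_dy (hk : ContDiff ℝ 2 (uncurry kπ)) (x y v w : Ed d) :
    ⟪fderiv ℝ (fun y' => grad1 kπ x y') y v, w⟫
      = fderiv ℝ (fderiv ℝ (uncurry kπ)) (x, y) (0, v) (w, 0) :=
  inner_fderiv_grad1_comp hk (hasFDerivAt_prodMk_right x y) v w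

lemma inner_grad2_dy (hk : ContDiff ℝ 2 (uncurry kπ)) (x y v z : Ed d) :
    ⟪fderiv ℝ (fun y' => grad2 kπ x y') y v, z⟫
      = fderiv ℝ (fderiv ℝ (uncurry kπ)) (x, y) (0, v) (0, z) :=
  inner_fderiv_grad2_comp hk (hasFDerivAt_prodMk_right x y) v z

lemma grad_swap (hsymm : ∀ x y, kπ x y = kπ y x) (x y : Ed d) :
    grad1 kπ x y = grad2 kπ y x := by
  rw [grad1, grad2]
  congr 1
  funext x'
  exact hsymm x' y

lemma inner_hess1_swap (hk : ContDiff ℝ 2 (uncurry kπ)) (hsymm : ∀ x y, kπ x y = kπ y x)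
    (x y v z : Ed d) :
    fderiv ℝ (fderiv ℝ (uncurry kπ)) (x, y) (0, v) (0, z) = ⟪hess1 kπ y x v, z⟫ := by
  rw [← inner_grad2_dy hk]
  congr 2
  rw [hess1]
  congr 1
  funext y'
  exact (grad_swap hsymm y' x).symm

lemma hess1_norm_le (hLpos : ∀ y, 0 ≤ L y)
    (hLip1 : ∀ y x x', ‖grad1 kπ x y - grad1 kπ x' y‖ ≤ L y * ‖x - x'‖) (x y : Ed d) :
    ‖hess1 kπ x y‖ ≤ L y := by
  have hlip : LipschitzWith (L y).toNNReal (fun x' => grad1 kπ x' y) :=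
    LipschitzWith.of_dist_le_mul fun a b => by
      simpa [dist_eq_norm, Real.coe_toNNReal _ (hLpos y)] using hLip1 y a b
  have := norm_fderiv_le_of_lipschitz ℝ hlip (x₀ := x)
  rwa [Real.coe_toNNReal _ (hLpos y)] at this

lemma grad1_dy_norm_le (hsymm : ∀ x y, kπ x y = kπ y x) (hLpos : ∀ y, 0 ≤ L y)
    (hLip2 : ∀ y x x', ‖grad2 kπ x y - grad2 kπ x' y‖ ≤ L y * ‖x - x'‖) (x y : Ed d) :
    ‖fderiv ℝ (fun y' => grad1 kπ x y') y‖ ≤ L x := by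
  have heq : (fun y' => grad1 kπ x y') = fun y' => grad2 kπ y' x := by
    funext y'; rw [grad1, grad2]; congr 1; funext a; exact hsymm a y'
  rw [heq]
  have hlip : LipschitzWith (L x).toNNReal (fun y' => grad2 kπ y' x) :=
    LipschitzWith.of_dist_le_mul fun a b => by
      simpa [dist_eq_norm, Real.coe_toNNReal _ (hLpos x)] using hLip2 x a b
  have := norm_fderiv_le_of_lipschitz ℝ hlip (x₀ := y)
  rwa [Real.coe_toNNReal _ (hLpos x)] at this

lemma grad1_growth (hsymm : ∀ x y, kπ x y = kπ y x) (hLpos : ∀ y, 0 ≤ L y)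
    (hLip1 : ∀ y x x', ‖grad1 kπ x y - grad1 kπ x' y‖ ≤ L y * ‖x - x'‖)
    (hLip2 : ∀ y x x', ‖grad2 kπ x y - grad2 kπ x' y‖ ≤ L y * ‖x - x'‖) (x y : Ed d) :
    ‖grad1 kπ x y‖ ≤ ‖grad1 kπ 0 0‖ + L 0 * ‖y‖ + L y * ‖x‖ := by
  have h1 : ‖grad1 kπ x y - grad1 kπ 0 y‖ ≤ L y * ‖x‖ := by
    simpa using hLip1 y x 0
  have h2 : ‖grad1 kπ 0 y - grad1 kπ 0 0‖ ≤ L 0 * ‖y‖ := by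
    rw [grad_swap hsymm 0 y, grad_swap hsymm 0 0]
    simpa using hLip2 0 y 0
  calc ‖grad1 kπ x y‖
      = ‖(grad1 kπ x y - grad1 kπ 0 y) + ((grad1 kπ 0 y - grad1 kπ 0 0) + grad1 kπ 0 0)‖ := by
        congr 1; abel
    _ ≤ ‖grad1 kπ x y - grad1 kπ 0 y‖ + (‖grad1 kπ 0 y - grad1 kπ 0 0‖ + ‖grad1 kπ 0 0‖) :=
        (norm_add_le _ _).trans (by gcongr; exact norm_add_le _ _)
    _ ≤ L y * ‖x‖ + (L 0 * ‖y‖ + ‖grad1 kπ 0 0‖) := by gcongr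
    _ = ‖grad1 kπ 0 0‖ + L 0 * ‖y‖ + L y * ‖x‖ := by ring

lemma grad2_growth (hsymm : ∀ x y, kπ x y = kπ y x) (hLpos : ∀ y, 0 ≤ L y)
    (hLip1 : ∀ y x x', ‖grad1 kπ x y - grad1 kπ x' y‖ ≤ L y * ‖x - x'‖)
    (hLip2 : ∀ y x x', ‖grad2 kπ x y - grad2 kπ x' y‖ ≤ L y * ‖x - x'‖) (x y : Ed d) :
    ‖grad2 kπ x y‖ ≤ ‖grad1 kπ 0 0‖ + L 0 * ‖x‖ + L x * ‖y‖ := by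
  rw [← grad_swap hsymm]
  exact grad1_growth hsymm hLpos hLip1 hLip2 y x

end helperlemmas

set_option maxHeartbeats 1000000 in
/-- The squared KSD functional along the path `ρ_t = (I + t∇ψ)_#μ` is twice
differentiable at `t = 0`, and its second derivative is
`∬⟨∇ψ(x), ∇₁∇₂k_π(x,y)∇ψ(y)⟩dμdμ + ∬⟨∇ψ(x), H₁k_π(x,y)∇ψ(x)⟩dμdμ`. -/
theorem statement7 {d : ℕ}
    (μ : Measure (Ed d)) [IsProbabilityMeasure μ]
    (hμ2 : Integrable (fun x => ‖x‖ ^ 2) μ)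
    (ψ : Ed d → ℝ) (hψ : ContDiff ℝ (⊤ : ℕ∞) ψ) (hψc : HasCompactSupport ψ)
    (kπ : Ed d → Ed d → ℝ)
    (hkC2 : ContDiff ℝ 2 (uncurry kπ))
    (hsymm : ∀ x y, kπ x y = kπ y x)
    (hkint : Integrable (fun p : Ed d × Ed d => kπ p.1 p.2) (μ.prod μ))
    (L : Ed d → ℝ) (hLpos : ∀ y, 0 ≤ L y) (hLcont : Continuous L)
    (hLint : ∀ ρ : Measure (Ed d), IsProbabilityMeasure ρ →
      Integrable (fun x => ‖x‖ ^ 2) ρ → Integrable L ρ)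
    (hLip1 : ∀ y x x', ‖grad1 kπ x y - grad1 kπ x' y‖ ≤ L y * ‖x - x'‖)
    (hLip2 : ∀ y x x', ‖grad2 kπ x y - grad2 kπ x' y‖ ≤ L y * ‖x - x'‖)
    (hHess : ∀ ρ ρ' : Measure (Ed d), IsProbabilityMeasure ρ → IsProbabilityMeasure ρ' →
      Integrable (fun x => ‖x‖ ^ 2) ρ → Integrable (fun x => ‖x‖ ^ 2) ρ' →
      Integrable (fun p : Ed d × Ed d => ‖hess1 kπ p.1 p.2‖) (ρ.prod ρ'))
    (G : ℝ → ℝ)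
    (hG : ∀ t, G t = (1/2) *
      ∫ x, (∫ y, kπ (x + t • gradient ψ x) (y + t • gradient ψ y) ∂μ) ∂μ) :
    (∀ t : ℝ, DifferentiableAt ℝ G t) ∧
    HasDerivAt (deriv G)
      ((∫ x, (∫ y,
          ⟪gradient ψ x, (fderiv ℝ (fun y' => grad1 kπ x y') y) (gradient ψ y)⟫ ∂μ) ∂μ) +
        ∫ x, (∫ y, ⟪gradient ψ x, (hess1 kπ x y) (gradient ψ x)⟫ ∂μ) ∂μ)
      0 := by
  classical
  -- the transport field and its properties
  set φ : Ed d → Ed d := gradient ψ with hφdef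
  have hφcont : Continuous φ := by
    have h1 : Continuous (fderiv ℝ ψ) := hψ.continuous_fderiv (by simp)
    have : φ = fun x => (InnerProductSpace.toDual ℝ (Ed d)).symm (fderiv ℝ ψ x) := rfl
    rw [this]
    exact (LinearIsometryEquiv.continuous _).comp h1
  have hφsupp : HasCompactSupport φ := by
    have h1 : HasCompactSupport (fderiv ℝ ψ) := hψc.fderiv ℝ
    have : φ = (fun ℓ => (InnerProductSpace.toDual ℝ (Ed d)).symm ℓ) ∘ (fderiv ℝ ψ) := rfl
    rw [this]
    exact h1.comp_left (by simp)
  obtain ⟨C₀, hC₀⟩ := hφcont.bounded_above_of_compact_support hφsupp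
  set C : ℝ := max C₀ 1 with hCdef
  have hC0 : 0 < C := lt_of_lt_of_le one_pos (le_max_right _ _)
  have hCb : ∀ x, ‖φ x‖ ≤ C := fun x => (hC₀ x).trans (le_max_left _ _)
  set Φ : Ed d × Ed d → Ed d × Ed d := fun p => (φ p.1, φ p.2) with hΦdef
  have hΦcont : Continuous Φ :=
    (hφcont.comp continuous_fst).prodMk (hφcont.comp continuous_snd)
  -- integrability preliminaries
  have hnorm1 : Integrable (fun x : Ed d => ‖x‖) μ := by
    refine ((integrable_const (1 : ℝ)).add hμ2).mono'
      continuous_norm.aestronglyMeasurable (Filter.Eventually.of_forall fun x => ?_)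
    have h0 : (0:ℝ) ≤ ‖x‖ := norm_nonneg x
    simp only [Pi.add_apply, norm_norm]
    nlinarith [sq_nonneg (‖x‖ - 1)]
  have hLμ : Integrable L μ := hLint μ inferInstance hμ2
  have hfst : ∀ {f : Ed d → ℝ}, Integrable f μ →
      Integrable (fun p : Ed d × Ed d => f p.1) (μ.prod μ) := by
    intro f hf
    simpa using hf.mul_prod (integrable_const (1 : ℝ))
  have hsnd : ∀ {f : Ed d → ℝ}, Integrable f μ →
      Integrable (fun p : Ed d × Ed d => f p.2) (μ.prod μ) := by
    intro f hf
    simpa using (integrable_const (1 : ℝ)).mul_prod hf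
  -- bound for L along the flow
  have hLM : ∀ R : ℝ, ∃ M : ℝ, 0 ≤ M ∧
      ∀ (y : Ed d) (t : ℝ), |t| ≤ R → L (y + t • φ y) ≤ M + L y := by
    intro R
    obtain ⟨M, hM⟩ : ∃ M, ∀ z ∈ Metric.cthickening (C * R) (tsupport φ), L z ≤ M := by
      have hcomp : IsCompact (Metric.cthickening (C * R) (tsupport φ)) := hφsupp.cthickening
      rcases (hcomp.image_of_continuousOn hLcont.continuousOn).bddAbove with ⟨M, hM⟩
      exact ⟨M, fun z hz => hM (mem_image_of_mem L hz)⟩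
    refine ⟨max M 0, le_max_right _ _, fun y t ht => ?_⟩
    by_cases hy : φ y = 0
    · have : L (y + t • φ y) = L y := by rw [hy, smul_zero, add_zero]
      rw [this]
      have := le_max_right M 0
      linarith
    · have hyS : y ∈ tsupport φ := subset_tsupport φ (by simpa [Function.mem_support] using hy)
      have hR0 : 0 ≤ R := (abs_nonneg t).trans ht
      have hdist : dist (y + t • φ y) y ≤ C * R := by
        rw [dist_eq_norm, add_sub_cancel_left, norm_smul, Real.norm_eq_abs]
        calc |t| * ‖φ y‖ ≤ R * C :=
              mul_le_mul ht (hCb y) (norm_nonneg _) hR0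
          _ = C * R := mul_comm _ _
      have hmem : y + t • φ y ∈ Metric.cthickening (C * R) (tsupport φ) :=
        Metric.mem_cthickening_of_dist_le _ y _ _ hyS hdist
      have h1 := hM _ hmem
      have h2 := le_max_left M 0
      have h3 := hLpos y
      linarith
  -- smoothness of the kernel
  have hKdiff : Differentiable ℝ (uncurry kπ) := hkC2.differentiable (by norm_num)
  have hK1 : ContDiff ℝ 1 (fderiv ℝ (uncurry kπ)) := hkC2.fderiv_right (le_refl _)
  have hKd1diff : Differentiable ℝ (fderiv ℝ (uncurry kπ)) := hK1.differentiable one_ne_zero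
  have hKdcont : Continuous (fderiv ℝ (uncurry kπ)) := hK1.continuous
  have hBcont : Continuous (fderiv ℝ (fderiv ℝ (uncurry kπ))) := hK1.continuous_fderiv one_ne_zero
  -- pointwise derivatives along the flow
  have hline : ∀ (p : Ed d × Ed d) (t : ℝ), HasDerivAt (fun s : ℝ => p + s • Φ p) (Φ p) t := by
    intro p t
    simpa using ((hasDerivAt_id t).smul_const (Φ p)).const_add p
  have hD1 : ∀ (p : Ed d × Ed d) (t : ℝ),
      HasDerivAt (fun s : ℝ => uncurry kπ (p + s • Φ p))
        (fderiv ℝ (uncurry kπ) (p + t • Φ p) (Φ p)) t := by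
    intro p t
    exact (hKdiff (p + t • Φ p)).hasFDerivAt.comp_hasDerivAt t (hline p t)
  have hD2 : ∀ (p : Ed d × Ed d) (t : ℝ),
      HasDerivAt (fun s : ℝ => fderiv ℝ (uncurry kπ) (p + s • Φ p) (Φ p))
        (fderiv ℝ (fderiv ℝ (uncurry kπ)) (p + t • Φ p) (Φ p) (Φ p)) t := by
    intro p t
    have h1 : HasDerivAt (fun s : ℝ => fderiv ℝ (uncurry kπ) (p + s • Φ p))
        (fderiv ℝ (fderiv ℝ (uncurry kπ)) (p + t • Φ p) (Φ p)) t :=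
      (hKd1diff (p + t • Φ p)).hasFDerivAt.comp_hasDerivAt t (hline p t)
    have h2 := h1.clm_apply (hasDerivAt_const t (Φ p))
    simpa using h2
  -- continuity of the integrands
  have hmv : ∀ t : ℝ, Continuous fun p : Ed d × Ed d => p + t • Φ p := fun t =>
    continuous_id.add (hΦcont.const_smul t)
  have hcF : ∀ t : ℝ, Continuous fun p : Ed d × Ed d => uncurry kπ (p + t • Φ p) := fun t =>
    hkC2.continuous.comp (hmv t)
  have hcF1 : ∀ t : ℝ, Continuous fun p : Ed d × Ed d =>
      fderiv ℝ (uncurry kπ) (p + t • Φ p) (Φ p) := fun t =>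
    (hKdcont.comp (hmv t)).clm_apply hΦcont
  have hcF2 : ∀ t : ℝ, Continuous fun p : Ed d × Ed d =>
      fderiv ℝ (fderiv ℝ (uncurry kπ)) (p + t • Φ p) (Φ p) (Φ p) := fun t =>
    ((hBcont.comp (hmv t)).clm_apply hΦcont).clm_apply hΦcont
  -- integrable domination for the first derivative
  have hbound1 : ∀ R : ℝ, ∃ bnd : Ed d × Ed d → ℝ, Integrable bnd (μ.prod μ) ∧
      ∀ (p : Ed d × Ed d) (t : ℝ), |t| ≤ R →
        ‖fderiv ℝ (uncurry kπ) (p + t • Φ p) (Φ p)‖ ≤ bnd p := by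
    intro R
    obtain ⟨M, hM0, hM⟩ := hLM R
    refine ⟨fun p => C * ((‖grad1 kπ 0 0‖ + L 0 * (‖p.2‖ + C * R)) + (‖p.1‖ + C * R) * (M + L p.2))
        + C * ((‖grad1 kπ 0 0‖ + L 0 * (‖p.1‖ + C * R)) + (M + L p.1) * (‖p.2‖ + C * R)),
      ?_, ?_⟩
    · apply Integrable.add
      · apply Integrable.const_mul
        apply Integrable.add
        · exact (integrable_const _).add
            (((hsnd hnorm1).add (integrable_const _)).const_mul (L 0))
        · exact (hnorm1.add (integrable_const _)).mul_prod ((integrable_const M).add hLμ)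
      · apply Integrable.const_mul
        apply Integrable.add
        · exact (integrable_const _).add
            (((hfst hnorm1).add (integrable_const _)).const_mul (L 0))
        · exact ((integrable_const M).add hLμ).mul_prod (hnorm1.add (integrable_const _))
    · intro p t ht
      dsimp only
      have hR0 : 0 ≤ R := (abs_nonneg t).trans ht
      have hfde : fderiv ℝ (uncurry kπ) (p + t • Φ p) (Φ p)
          = ⟪grad1 kπ (p.1 + t • φ p.1) (p.2 + t • φ p.2), φ p.1⟫
            + ⟪grad2 kπ (p.1 + t • φ p.1) (p.2 + t • φ p.2), φ p.2⟫ :=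
        fderiv_uncurry_eq hKdiff _ _ _ _
      set X := p.1 + t • φ p.1 with hX
      set Y := p.2 + t • φ p.2 with hY
      have hXn : ‖X‖ ≤ ‖p.1‖ + C * R := by
        calc ‖X‖ ≤ ‖p.1‖ + ‖t • φ p.1‖ := norm_add_le _ _
          _ ≤ ‖p.1‖ + C * R := by
              rw [norm_smul, Real.norm_eq_abs]
              have := mul_le_mul ht (hCb p.1) (norm_nonneg _) hR0
              linarith [this, mul_comm R C]
      have hYn : ‖Y‖ ≤ ‖p.2‖ + C * R := by
        calc ‖Y‖ ≤ ‖p.2‖ + ‖t • φ p.2‖ := norm_add_le _ _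
          _ ≤ ‖p.2‖ + C * R := by
              rw [norm_smul, Real.norm_eq_abs]
              have := mul_le_mul ht (hCb p.2) (norm_nonneg _) hR0
              linarith [this, mul_comm R C]
      have hLX : L X ≤ M + L p.1 := hM p.1 t ht
      have hLY : L Y ≤ M + L p.2 := hM p.2 t ht
      have hg1 : ‖grad1 kπ X Y‖
          ≤ (‖grad1 kπ 0 0‖ + L 0 * (‖p.2‖ + C * R)) + (‖p.1‖ + C * R) * (M + L p.2) := by
        have h := grad1_growth hsymm hLpos hLip1 hLip2 X Y
        have h2 : L 0 * ‖Y‖ ≤ L 0 * (‖p.2‖ + C * R) :=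
          mul_le_mul_of_nonneg_left hYn (hLpos 0)
        have h3 : L Y * ‖X‖ ≤ (M + L p.2) * (‖p.1‖ + C * R) :=
          mul_le_mul hLY hXn (norm_nonneg _) (by linarith [hLpos p.2])
        have h4 : (M + L p.2) * (‖p.1‖ + C * R) = (‖p.1‖ + C * R) * (M + L p.2) := mul_comm _ _
        linarith
      have hg2 : ‖grad2 kπ X Y‖
          ≤ (‖grad1 kπ 0 0‖ + L 0 * (‖p.1‖ + C * R)) + (M + L p.1) * (‖p.2‖ + C * R) := by
        have h := grad2_growth hsymm hLpos hLip1 hLip2 X Y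
        have h2 : L 0 * ‖X‖ ≤ L 0 * (‖p.1‖ + C * R) :=
          mul_le_mul_of_nonneg_left hXn (hLpos 0)
        have h3 : L X * ‖Y‖ ≤ (M + L p.1) * (‖p.2‖ + C * R) :=
          mul_le_mul hLX hYn (norm_nonneg _) (by linarith [hLpos p.1])
        linarith
      have hi1 : |⟪grad1 kπ X Y, φ p.1⟫| ≤ ‖grad1 kπ X Y‖ * C := by
        refine (abs_real_inner_le_norm _ _).trans ?_
        exact mul_le_mul_of_nonneg_left (hCb p.1) (norm_nonneg _)
      have hi2 : |⟪grad2 kπ X Y, φ p.2⟫| ≤ ‖grad2 kπ X Y‖ * C := by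
        refine (abs_real_inner_le_norm _ _).trans ?_
        exact mul_le_mul_of_nonneg_left (hCb p.2) (norm_nonneg _)
      rw [hfde, Real.norm_eq_abs]
      have habs := abs_add_le (⟪grad1 kπ X Y, φ p.1⟫) (⟪grad2 kπ X Y, φ p.2⟫)
      have hm1 : ‖grad1 kπ X Y‖ * C
          ≤ C * ((‖grad1 kπ 0 0‖ + L 0 * (‖p.2‖ + C * R)) + (‖p.1‖ + C * R) * (M + L p.2)) := by
        rw [mul_comm]
        exact mul_le_mul_of_nonneg_left hg1 hC0.le
      have hm2 : ‖grad2 kπ X Y‖ * C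
          ≤ C * ((‖grad1 kπ 0 0‖ + L 0 * (‖p.1‖ + C * R)) + (M + L p.1) * (‖p.2‖ + C * R)) := by
        rw [mul_comm]
        exact mul_le_mul_of_nonneg_left hg2 hC0.le
      linarith
  -- integrability of the transported kernel, for every t
  have hFint : ∀ t : ℝ, Integrable (fun p : Ed d × Ed d => uncurry kπ (p + t • Φ p))
      (μ.prod μ) := by
    intro t
    obtain ⟨bnd, hbint, hb⟩ := hbound1 |t|
    refine (hkint.abs.add (hbint.const_mul |t|)).mono' ((hcF t).aestronglyMeasurable)
      (Filter.Eventually.of_forall fun p => ?_)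
    have hmvt : ‖uncurry kπ (p + t • Φ p) - uncurry kπ (p + (0:ℝ) • Φ p)‖ ≤ bnd p * ‖t - 0‖ := by
      refine Convex.norm_image_sub_le_of_norm_hasDerivWithin_le
        (s := Set.Icc (-|t|) (|t|)) (f' := fun s => fderiv ℝ (uncurry kπ) (p + s • Φ p) (Φ p))
        (fun z hz => (hD1 p z).hasDerivWithinAt) (fun z hz => ?_) (convex_Icc _ _) ?_ ?_
      · exact hb p z (abs_le.mpr hz)
      · constructor <;> simp [neg_abs_le, le_abs_self]
      · constructor <;> simp [neg_abs_le, le_abs_self]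
    have h0 : uncurry kπ (p + (0:ℝ) • Φ p) = kπ p.1 p.2 := by
      have hp : p + (0:ℝ) • Φ p = p := by simp
      rw [hp]
      rfl
    rw [h0] at hmvt
    have hmvt' : |uncurry kπ (p + t • Φ p) - kπ p.1 p.2| ≤ bnd p * |t| := by
      simpa [Real.norm_eq_abs] using hmvt
    have h1 : |uncurry kπ (p + t • Φ p)| ≤ |kπ p.1 p.2| + bnd p * |t| := by
      have h2 := abs_add_le (kπ p.1 p.2) (uncurry kπ (p + t • Φ p) - kπ p.1 p.2)
      have h3 : kπ p.1 p.2 + (uncurry kπ (p + t • Φ p) - kπ p.1 p.2)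
          = uncurry kπ (p + t • Φ p) := by ring
      rw [h3] at h2
      linarith
    simpa [mul_comm] using h1
  -- differentiation under the integral sign: first derivative
  have hmain1 : ∀ t₀ : ℝ,
      Integrable (fun p : Ed d × Ed d => fderiv ℝ (uncurry kπ) (p + t₀ • Φ p) (Φ p)) (μ.prod μ) ∧
      HasDerivAt (fun t : ℝ => ∫ p, uncurry kπ (p + t • Φ p) ∂(μ.prod μ))
        (∫ p, fderiv ℝ (uncurry kπ) (p + t₀ • Φ p) (Φ p) ∂(μ.prod μ)) t₀ := by
    intro t₀
    obtain ⟨bnd, hbint, hb⟩ := hbound1 (|t₀| + 1)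
    refine hasDerivAt_integral_of_dominated_loc_of_deriv_le
      (F := fun t (p : Ed d × Ed d) => uncurry kπ (p + t • Φ p))
      (F' := fun t (p : Ed d × Ed d) => fderiv ℝ (uncurry kπ) (p + t • Φ p) (Φ p)) (Metric.ball_mem_nhds _ one_pos)
      (Filter.Eventually.of_forall fun t => (hcF t).aestronglyMeasurable)
      (hFint t₀) ((hcF1 t₀).aestronglyMeasurable)
      (Filter.Eventually.of_forall fun p t ht => ?_) hbint
      (Filter.Eventually.of_forall fun p t ht => hD1 p t)
    have habs : |t| ≤ |t₀| + 1 := by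
      have h1 : |t - t₀| < 1 := by rwa [Metric.mem_ball, Real.dist_eq] at ht
      have h2 : |t| - |t₀| ≤ |t - t₀| := abs_sub_abs_le_abs_sub t t₀
      linarith
    exact hb p t habs
  -- identification of G with the product-integral form
  have hGfun : G = fun t : ℝ => (1/2 : ℝ) * ∫ p, uncurry kπ (p + t • Φ p) ∂(μ.prod μ) := by
    funext t
    rw [hG t]
    congr 1
    exact MeasureTheory.integral_integral (f := fun x y => kπ (x + t • φ x) (y + t • φ y))
      (hFint t)
  have hGderiv : ∀ t : ℝ, HasDerivAt G
      ((1/2 : ℝ) * ∫ p, fderiv ℝ (uncurry kπ) (p + t • Φ p) (Φ p) ∂(μ.prod μ)) t := by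
    intro t
    rw [hGfun]
    exact (hmain1 t).2.const_mul (1/2 : ℝ)
  refine ⟨fun t => (hGderiv t).differentiableAt, ?_⟩
  have hderivG : deriv G = fun t : ℝ =>
      (1/2 : ℝ) * ∫ p, fderiv ℝ (uncurry kπ) (p + t • Φ p) (Φ p) ∂(μ.prod μ) :=
    funext fun t => (hGderiv t).deriv
  rw [hderivG]
  -- second-derivative step
  obtain ⟨M, hM0, hM⟩ := hLM 1
  have hBsymm : ∀ (q a b : Ed d × Ed d),
      fderiv ℝ (fderiv ℝ (uncurry kπ)) q a b = fderiv ℝ (fderiv ℝ (uncurry kπ)) q b a :=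
    fun q a b => second_derivative_symmetric (fun z => (hKdiff z).hasFDerivAt)
      ((hKd1diff q).hasFDerivAt) a b
  have hsplit : ∀ p : Ed d × Ed d,
      Φ p = ((φ p.1, 0) : Ed d × Ed d) + ((0, φ p.2) : Ed d × Ed d) := by
    intro p
    rw [hΦdef]
    simp [Prod.ext_iff]
  have hexp : ∀ (q p : Ed d × Ed d),
      fderiv ℝ (fderiv ℝ (uncurry kπ)) q (Φ p) (Φ p)
        = (fderiv ℝ (fderiv ℝ (uncurry kπ)) q (φ p.1, 0) (φ p.1, 0)
          + fderiv ℝ (fderiv ℝ (uncurry kπ)) q (0, φ p.2) (φ p.1, 0))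
          + (fderiv ℝ (fderiv ℝ (uncurry kπ)) q (φ p.1, 0) (0, φ p.2)
          + fderiv ℝ (fderiv ℝ (uncurry kπ)) q (0, φ p.2) (0, φ p.2)) := by
    intro q p
    conv_lhs => rw [hsplit p]
    simp only [map_add, ContinuousLinearMap.add_apply]
  have hterm1 : ∀ (X Y u w : Ed d),
      |fderiv ℝ (fderiv ℝ (uncurry kπ)) (X, Y) (u, 0) (w, 0)| ≤ L Y * ‖u‖ * ‖w‖ := by
    intro X Y u w
    rw [← inner_hess1 hkC2]
    refine (abs_real_inner_le_norm _ _).trans ?_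
    have h1 : ‖hess1 kπ X Y u‖ ≤ L Y * ‖u‖ :=
      (ContinuousLinearMap.le_opNorm _ _).trans
        (mul_le_mul_of_nonneg_right (hess1_norm_le hLpos hLip1 X Y) (norm_nonneg u))
    exact mul_le_mul_of_nonneg_right h1 (norm_nonneg w)
  have hterm2 : ∀ (X Y v w : Ed d),
      |fderiv ℝ (fderiv ℝ (uncurry kπ)) (X, Y) (0, v) (w, 0)| ≤ L X * ‖v‖ * ‖w‖ := by
    intro X Y v w
    rw [← inner_grad1_dy hkC2]
    refine (abs_real_inner_le_norm _ _).trans ?_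
    have h1 : ‖fderiv ℝ (fun y' => grad1 kπ X y') Y v‖ ≤ L X * ‖v‖ :=
      (ContinuousLinearMap.le_opNorm _ _).trans
        (mul_le_mul_of_nonneg_right (grad1_dy_norm_le hsymm hLpos hLip2 X Y) (norm_nonneg v))
    exact mul_le_mul_of_nonneg_right h1 (norm_nonneg w)
  have hterm4 : ∀ (X Y v z : Ed d),
      |fderiv ℝ (fderiv ℝ (uncurry kπ)) (X, Y) (0, v) (0, z)| ≤ L X * ‖v‖ * ‖z‖ := by
    intro X Y v z
    rw [inner_hess1_swap hkC2 hsymm]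
    refine (abs_real_inner_le_norm _ _).trans ?_
    have h1 : ‖hess1 kπ Y X v‖ ≤ L X * ‖v‖ :=
      (ContinuousLinearMap.le_opNorm _ _).trans
        (mul_le_mul_of_nonneg_right (hess1_norm_le hLpos hLip1 Y X) (norm_nonneg v))
    exact mul_le_mul_of_nonneg_right h1 (norm_nonneg z)
  have hqeq : ∀ (p : Ed d × Ed d) (t : ℝ),
      p + t • Φ p = (p.1 + t • φ p.1, p.2 + t • φ p.2) := fun p t => rfl
  have hMC0 : ∀ z : Ed d, 0 ≤ (M + L z) * C := fun z =>
    mul_nonneg (add_nonneg hM0 (hLpos z)) hC0.le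
  have hb2 : ∀ p : Ed d × Ed d, ∀ t ∈ Metric.ball (0:ℝ) 1,
      ‖fderiv ℝ (fderiv ℝ (uncurry kπ)) (p + t • Φ p) (Φ p) (Φ p)‖
        ≤ (M + L p.2) * C * C + 3 * ((M + L p.1) * C * C) := by
    intro p t ht
    have ht1 : |t| ≤ 1 := by
      rw [Metric.mem_ball, Real.dist_eq, sub_zero] at ht; exact ht.le
    have hLX : L (p.1 + t • φ p.1) ≤ M + L p.1 := hM p.1 t ht1
    have hLY : L (p.2 + t • φ p.2) ≤ M + L p.2 := hM p.2 t ht1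
    rw [Real.norm_eq_abs, hqeq p t, hexp]
    have e1 := hterm1 (p.1 + t • φ p.1) (p.2 + t • φ p.2) (φ p.1) (φ p.1)
    have e2 := hterm2 (p.1 + t • φ p.1) (p.2 + t • φ p.2) (φ p.2) (φ p.1)
    have e4 := hterm4 (p.1 + t • φ p.1) (p.2 + t • φ p.2) (φ p.2) (φ p.2)
    rw [hBsymm (p.1 + t • φ p.1, p.2 + t • φ p.2) (φ p.1, 0) (0, φ p.2)]
    have c1 : L (p.2 + t • φ p.2) * ‖φ p.1‖ * ‖φ p.1‖ ≤ (M + L p.2) * C * C := by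
      have u1 : L (p.2 + t • φ p.2) * ‖φ p.1‖ ≤ (M + L p.2) * C :=
        mul_le_mul hLY (hCb p.1) (norm_nonneg _) (add_nonneg hM0 (hLpos _))
      exact mul_le_mul u1 (hCb p.1) (norm_nonneg _) (hMC0 p.2)
    have c2 : L (p.1 + t • φ p.1) * ‖φ p.2‖ * ‖φ p.1‖ ≤ (M + L p.1) * C * C := by
      have u1 : L (p.1 + t • φ p.1) * ‖φ p.2‖ ≤ (M + L p.1) * C :=
        mul_le_mul hLX (hCb p.2) (norm_nonneg _) (add_nonneg hM0 (hLpos _))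
      exact mul_le_mul u1 (hCb p.1) (norm_nonneg _) (hMC0 p.1)
    have c4 : L (p.1 + t • φ p.1) * ‖φ p.2‖ * ‖φ p.2‖ ≤ (M + L p.1) * C * C := by
      have u1 : L (p.1 + t • φ p.1) * ‖φ p.2‖ ≤ (M + L p.1) * C :=
        mul_le_mul hLX (hCb p.2) (norm_nonneg _) (add_nonneg hM0 (hLpos _))
      exact mul_le_mul u1 (hCb p.2) (norm_nonneg _) (hMC0 p.1)
    set T1 := fderiv ℝ (fderiv ℝ (uncurry kπ)) (p.1 + t • φ p.1, p.2 + t • φ p.2)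
        (φ p.1, 0) (φ p.1, 0) with hT1
    set T2 := fderiv ℝ (fderiv ℝ (uncurry kπ)) (p.1 + t • φ p.1, p.2 + t • φ p.2)
        (0, φ p.2) (φ p.1, 0) with hT2
    set T4 := fderiv ℝ (fderiv ℝ (uncurry kπ)) (p.1 + t • φ p.1, p.2 + t • φ p.2)
        (0, φ p.2) (0, φ p.2) with hT4
    have A := abs_add_le (T1 + T2) (T2 + T4)
    have A1 := abs_add_le T1 T2
    have A2 := abs_add_le T2 T4
    linarith
  have hbnd2int : Integrable
      (fun p : Ed d × Ed d => (M + L p.2) * C * C + 3 * ((M + L p.1) * C * C)) (μ.prod μ) := by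
    apply Integrable.add
    · exact (((integrable_const M).add (hsnd hLμ)).mul_const C).mul_const C
    · exact ((((integrable_const M).add (hfst hLμ)).mul_const C).mul_const C).const_mul 3
  have hmain2 := hasDerivAt_integral_of_dominated_loc_of_deriv_le
    (F := fun t (p : Ed d × Ed d) => fderiv ℝ (uncurry kπ) (p + t • Φ p) (Φ p))
    (F' := fun t (p : Ed d × Ed d) =>
      fderiv ℝ (fderiv ℝ (uncurry kπ)) (p + t • Φ p) (Φ p) (Φ p)) (Metric.ball_mem_nhds _ one_pos)
    (Filter.Eventually.of_forall fun t => (hcF1 t).aestronglyMeasurable)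
    ((hmain1 0).1) ((hcF2 0).aestronglyMeasurable)
    (Filter.Eventually.of_forall fun p t ht => hb2 p t ht) hbnd2int
    (Filter.Eventually.of_forall fun p t _ => hD2 p t)
  have hd2 : HasDerivAt (fun t : ℝ =>
      (1/2 : ℝ) * ∫ p, fderiv ℝ (uncurry kπ) (p + t • Φ p) (Φ p) ∂(μ.prod μ))
      ((1/2 : ℝ) * ∫ p, fderiv ℝ (fderiv ℝ (uncurry kπ)) (p + (0:ℝ) • Φ p) (Φ p) (Φ p)
        ∂(μ.prod μ)) 0 := hmain2.2.const_mul _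
  -- identification of the value of the second derivative
  -- continuity of the pieces
  have hpair1 : Continuous fun p : Ed d × Ed d => ((φ p.1 : Ed d), (0 : Ed d)) :=
    (hφcont.comp continuous_fst).prodMk continuous_const
  have hpair2 : Continuous fun p : Ed d × Ed d => ((0 : Ed d), (φ p.2 : Ed d)) :=
    continuous_const.prodMk (hφcont.comp continuous_snd)
  have hT1int : Integrable
      (fun p : Ed d × Ed d => fderiv ℝ (fderiv ℝ (uncurry kπ)) p (φ p.1, 0) (φ p.1, 0))
      (μ.prod μ) := by
    refine (((hsnd hLμ).mul_const C).mul_const C).mono'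
      (((hBcont.clm_apply hpair1).clm_apply hpair1).aestronglyMeasurable)
      (Filter.Eventually.of_forall fun p => ?_)
    rw [Real.norm_eq_abs]
    refine (hterm1 p.1 p.2 (φ p.1) (φ p.1)).trans ?_
    have u1 : L p.2 * ‖φ p.1‖ ≤ L p.2 * C := mul_le_mul_of_nonneg_left (hCb p.1) (hLpos p.2)
    exact mul_le_mul u1 (hCb p.1) (norm_nonneg _) (mul_nonneg (hLpos _) hC0.le)
  have hT2int : Integrable
      (fun p : Ed d × Ed d => fderiv ℝ (fderiv ℝ (uncurry kπ)) p (0, φ p.2) (φ p.1, 0))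
      (μ.prod μ) := by
    refine (((hfst hLμ).mul_const C).mul_const C).mono'
      (((hBcont.clm_apply hpair2).clm_apply hpair1).aestronglyMeasurable)
      (Filter.Eventually.of_forall fun p => ?_)
    rw [Real.norm_eq_abs]
    refine (hterm2 p.1 p.2 (φ p.2) (φ p.1)).trans ?_
    have u1 : L p.1 * ‖φ p.2‖ ≤ L p.1 * C := mul_le_mul_of_nonneg_left (hCb p.2) (hLpos p.1)
    exact mul_le_mul u1 (hCb p.1) (norm_nonneg _) (mul_nonneg (hLpos _) hC0.le)
  have hT4int : Integrable
      (fun p : Ed d × Ed d => fderiv ℝ (fderiv ℝ (uncurry kπ)) p (0, φ p.2) (0, φ p.2))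
      (μ.prod μ) := by
    refine (((hfst hLμ).mul_const C).mul_const C).mono'
      (((hBcont.clm_apply hpair2).clm_apply hpair2).aestronglyMeasurable)
      (Filter.Eventually.of_forall fun p => ?_)
    rw [Real.norm_eq_abs]
    refine (hterm4 p.1 p.2 (φ p.2) (φ p.2)).trans ?_
    have u1 : L p.1 * ‖φ p.2‖ ≤ L p.1 * C := mul_le_mul_of_nonneg_left (hCb p.2) (hLpos p.1)
    exact mul_le_mul u1 (hCb p.2) (norm_nonneg _) (mul_nonneg (hLpos _) hC0.le)
  -- the integral value
  have hzero : (fun p : Ed d × Ed d =>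
        fderiv ℝ (fderiv ℝ (uncurry kπ)) (p + (0:ℝ) • Φ p) (Φ p) (Φ p))
      = fun p => fderiv ℝ (fderiv ℝ (uncurry kπ)) p (Φ p) (Φ p) := by
    funext p
    have : p + (0:ℝ) • Φ p = p := by simp
    rw [this]
  have hpteq : (fun p : Ed d × Ed d => fderiv ℝ (fderiv ℝ (uncurry kπ)) p (Φ p) (Φ p))
      = fun p => (fderiv ℝ (fderiv ℝ (uncurry kπ)) p (φ p.1, 0) (φ p.1, 0)
          + fderiv ℝ (fderiv ℝ (uncurry kπ)) p (0, φ p.2) (φ p.1, 0))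
          + (fderiv ℝ (fderiv ℝ (uncurry kπ)) p (0, φ p.2) (φ p.1, 0)
          + fderiv ℝ (fderiv ℝ (uncurry kπ)) p (0, φ p.2) (0, φ p.2)) := by
    funext p
    rw [hexp p p, hBsymm p (φ p.1, 0) (0, φ p.2)]
  have h41 : ∫ p, fderiv ℝ (fderiv ℝ (uncurry kπ)) p (0, φ p.2) (0, φ p.2) ∂(μ.prod μ)
      = ∫ p, fderiv ℝ (fderiv ℝ (uncurry kπ)) p (φ p.1, 0) (φ p.1, 0) ∂(μ.prod μ) := by
    have heq : (fun p : Ed d × Ed d => fderiv ℝ (fderiv ℝ (uncurry kπ)) p (0, φ p.2) (0, φ p.2))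
        = fun p => (fun q : Ed d × Ed d =>
            fderiv ℝ (fderiv ℝ (uncurry kπ)) q (φ q.1, 0) (φ q.1, 0)) p.swap := by
      funext p
      have hL := inner_hess1_swap hkC2 hsymm p.1 p.2 (φ p.2) (φ p.2)
      have hR := inner_hess1 hkC2 p.2 p.1 (φ p.2) (φ p.2)
      exact hL.trans hR
    rw [heq]
    exact MeasureTheory.integral_prod_swap (fun q : Ed d × Ed d =>
      fderiv ℝ (fderiv ℝ (uncurry kπ)) q (φ q.1, 0) (φ q.1, 0))
  have hiter1 : ∫ p, fderiv ℝ (fderiv ℝ (uncurry kπ)) p (φ p.1, 0) (φ p.1, 0) ∂(μ.prod μ)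
      = ∫ x, ∫ y, ⟪φ x, (hess1 kπ x y) (φ x)⟫ ∂μ ∂μ := by
    have h := MeasureTheory.integral_integral
      (f := fun x y => fderiv ℝ (fderiv ℝ (uncurry kπ)) (x, y) (φ x, 0) (φ x, 0)) hT1int
    rw [← h]
    have hpt : ∀ x y : Ed d, fderiv ℝ (fderiv ℝ (uncurry kπ)) (x, y) (φ x, 0) (φ x, 0)
        = ⟪φ x, (hess1 kπ x y) (φ x)⟫ := fun x y => by
      rw [← inner_hess1 hkC2, real_inner_comm]
    simp only [hpt]
  have hiter2 : ∫ p, fderiv ℝ (fderiv ℝ (uncurry kπ)) p (0, φ p.2) (φ p.1, 0) ∂(μ.prod μ)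
      = ∫ x, ∫ y, ⟪φ x, (fderiv ℝ (fun y' => grad1 kπ x y') y) (φ y)⟫ ∂μ ∂μ := by
    have h := MeasureTheory.integral_integral
      (f := fun x y => fderiv ℝ (fderiv ℝ (uncurry kπ)) (x, y) (0, φ y) (φ x, 0)) hT2int
    rw [← h]
    have hpt : ∀ x y : Ed d, fderiv ℝ (fderiv ℝ (uncurry kπ)) (x, y) (0, φ y) (φ x, 0)
        = ⟪φ x, (fderiv ℝ (fun y' => grad1 kπ x y') y) (φ y)⟫ := fun x y => by
      rw [← inner_grad1_dy hkC2, real_inner_comm]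
    simp only [hpt]
  have hval : (1/2 : ℝ) * ∫ p, fderiv ℝ (fderiv ℝ (uncurry kπ)) (p + (0:ℝ) • Φ p) (Φ p) (Φ p)
        ∂(μ.prod μ)
      = (∫ x, ∫ y, ⟪φ x, (fderiv ℝ (fun y' => grad1 kπ x y') y) (φ y)⟫ ∂μ ∂μ)
        + ∫ x, ∫ y, ⟪φ x, (hess1 kπ x y) (φ x)⟫ ∂μ ∂μ := by
    have h12 : Integrable (fun p : Ed d × Ed d =>
        fderiv ℝ (fderiv ℝ (uncurry kπ)) p (φ p.1, 0) (φ p.1, 0)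
          + fderiv ℝ (fderiv ℝ (uncurry kπ)) p (0, φ p.2) (φ p.1, 0)) (μ.prod μ) :=
      hT1int.add hT2int
    have h34 : Integrable (fun p : Ed d × Ed d =>
        fderiv ℝ (fderiv ℝ (uncurry kπ)) p (0, φ p.2) (φ p.1, 0)
          + fderiv ℝ (fderiv ℝ (uncurry kπ)) p (0, φ p.2) (0, φ p.2)) (μ.prod μ) :=
      hT2int.add hT4int
    rw [hzero, hpteq, integral_add h12 h34, integral_add hT1int hT2int,
      integral_add hT2int hT4int, h41, hiter1, hiter2]
    ring
  exact hval ▸ hd2
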